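/- F_B(ℝ^m), the set of normal, upper semi-continuous fuzzy sets with compact support, is dense in (F_B(ℝ^m)^p, d_p). In particular, for u ∈ F_B(ℝ^m)^p, the truncations u^{(1/n)} (defined by u^{(1/n)}(x) = u(x) if u(x) ≥ 1/n and 0 otherwise) lie in F_B(ℝ^m) and d_p(u^{(1/n)}, u) → 0. -/

import Mathlib

open Metric Set MeasureTheory Filter

noncomputable section

/-- `Em m` is the Euclidean space ℝ^m. -/
abbrev Em (m : ℕ) := EuclideanSpace ℝ (Fin m)

/-- A set is star-shaped if it contains a point `x` such that the segment from `x`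
to any point of the set lies in the set. -/
def StarShaped {m : ℕ} (K : Set (Em m)) : Prop :=
  ∃ x ∈ K, ∀ y ∈ K, segment ℝ x y ⊆ K

/-- The kernel of a set: all points seeing the whole set. -/
def kern {m : ℕ} (K : Set (Em m)) : Set (Em m) :=
  {x | x ∈ K ∧ ∀ y ∈ K, segment ℝ x y ⊆ K}

/-- Kuratowski upper limit of a sequence of sets. -/
def KLimsup {m : ℕ} (C : ℕ → Set (Em m)) : Set (Em m) :=
  ⋂ n : ℕ, closure (⋃ k : ℕ, ⋃ _ : n ≤ k, C k)

/-- Kuratowski lower limit of a sequence of sets. -/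
def KLiminf {m : ℕ} (C : ℕ → Set (Em m)) : Set (Em m) :=
  {x | ∃ f : ℕ → Em m, (∀ n, f n ∈ C n) ∧ Tendsto f atTop (nhds x)}

/-- The α-cut of a fuzzy set `u`, for α > 0. -/
def acut {m : ℕ} (u : Em m → ℝ) (a : ℝ) : Set (Em m) := {x | a ≤ u x}

/-- The support (0-cut) of a fuzzy set. -/
def fsupp {m : ℕ} (u : Em m → ℝ) : Set (Em m) := closure {x | 0 < u x}

/-- Membership in `F_B(ℝ^m)^p`: normal, upper semi-continuous fuzzy sets with
compact α-cuts for α ∈ (0,1] and α ↦ H([u]_α, {0})^p integrable on (0,1]. -/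
structure IsFuzzyBp {m : ℕ} (p : ℝ) (u : Em m → ℝ) : Prop where
  mem01 : ∀ x, u x ∈ Icc (0:ℝ) 1
  normal : ∃ x, u x = 1
  usc : UpperSemicontinuous u
  compactCuts : ∀ a ∈ Ioc (0:ℝ) 1, IsCompact (acut u a)
  lp : IntegrableOn (fun a => hausdorffDist (acut u a) ({0} : Set (Em m)) ^ p)
        (Ioc (0:ℝ) 1)

/-- Membership in `F_B(ℝ^m)`: normal, upper semi-continuous fuzzy sets with
bounded (hence compact closed) support. -/
structure IsFuzzyB {m : ℕ} (u : Em m → ℝ) : Prop where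
  mem01 : ∀ x, u x ∈ Icc (0:ℝ) 1
  normal : ∃ x, u x = 1
  usc : UpperSemicontinuous u
  bddSupp : Bornology.IsBounded {x | 0 < u x}

/-- The `d_p` metric on fuzzy sets. -/
def dp {m : ℕ} (p : ℝ) (u v : Em m → ℝ) : ℝ :=
  (∫ a in Ioc (0:ℝ) 1, hausdorffDist (acut u a) (acut v a) ^ p) ^ (1/p)

/-- `d_p` distance to the crisp origin `0̂`. -/
def dpOrigin {m : ℕ} (p : ℝ) (u : Em m → ℝ) : ℝ :=
  (∫ a in Ioc (0:ℝ) 1, hausdorffDist (acut u a) ({0} : Set (Em m)) ^ p) ^ (1/p)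

/-- Uniformly p-mean bounded family. -/
def UPMB {m : ℕ} (p : ℝ) (U : Set (Em m → ℝ)) : Prop :=
  ∃ M : ℝ, ∀ u ∈ U, dpOrigin p u ≤ M

/-- p-mean equi-left-continuous family. -/
def PMELC {m : ℕ} (p : ℝ) (U : Set (Em m → ℝ)) : Prop :=
  ∀ ε > (0:ℝ), ∃ δ > (0:ℝ), ∀ h : ℝ, 0 ≤ h → h < δ → ∀ u ∈ U,
    (∫ a in Ioc h 1, hausdorffDist (acut u a) (acut u (a - h)) ^ p) ^ (1/p) < ε

/-- Truncation `u^{(a)}` of a fuzzy set at level `a`. -/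
def ftrunc {m : ℕ} (u : Em m → ℝ) (a : ℝ) : Em m → ℝ :=
  fun x => if a ≤ u x then u x else 0

/-- The kernel of a fuzzy set: intersection of the kernels of its cuts. -/
def fker {m : ℕ} (u : Em m → ℝ) : Set (Em m) :=
  ⋂ a ∈ Ioc (0:ℝ) 1, kern (acut u a)

/-- The full cut-family of a fuzzy set, with the 0-cut being the support. -/
def cutF {m : ℕ} (u : Em m → ℝ) (a : ℝ) : Set (Em m) :=
  if a = 0 then fsupp u else acut u a

/-- Conditions (i)–(iv) of the representation theorem for `F_B(ℝ^m)^p`. -/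
def GoodFamily {m : ℕ} (p : ℝ) (v : ℝ → Set (Em m)) : Prop :=
  (∀ l ∈ Ioc (0:ℝ) 1, (v l).Nonempty ∧ IsCompact (v l)) ∧
  (∀ l ∈ Ioc (0:ℝ) 1, v l = ⋂ g ∈ Ico (0:ℝ) l, v g) ∧
  (v 0 = closure (⋃ g ∈ Ioc (0:ℝ) 1, v g)) ∧
  IntegrableOn (fun a => hausdorffDist (v a) ({0} : Set (Em m)) ^ p) (Ioc (0:ℝ) 1)


/-! At levels `b ≥ a` the cuts of the truncation `u^{(a)}` and of `u` coincide, while for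
`b < a` the cut `[u^{(a)}]_b = [u]_a` is a nonempty subset of `[u]_b`, so the Hausdorff distance
of the two cuts is at most `2 H([u]_b, {0})`. Hence
`d_p(u^{(a)}, u)^p ≤ 2^p ∫_0^a H([u]_b, {0})^p db`, which tends to `0` with `a` by absolute
continuity of the integral. The truncations have bounded support `⊆ [u]_a`, and such fuzzy sets
lie in `F_B(ℝ^m)^p` because `b ↦ H([v]_b, {0})` is antitone, hence measurable, and bounded. -/

open Topology

section HausdorffSingleton

variable {α : Type*} [PseudoMetricSpace α] {A B : Set α} {x y : α}

lemma dist_le_hausdorffDist_singleton (hy : y ∈ B) (hB : Bornology.IsBounded B) :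
    dist y x ≤ hausdorffDist B {x} := by
  have fin : hausdorffEDist B {x} ≠ ⊤ :=
    hausdorffEDist_ne_top_of_nonempty_of_bounded ⟨y, hy⟩ (singleton_nonempty x) hB
      Bornology.isBounded_singleton
  simpa only [infDist_singleton] using infDist_le_hausdorffDist_of_mem hy fin

lemma hausdorffDist_singleton_le_of_subset (hAB : A ⊆ B) (hA : A.Nonempty)
    (hB : Bornology.IsBounded B) : hausdorffDist A {x} ≤ hausdorffDist B {x} := by
  obtain ⟨a, ha⟩ := hA
  refine hausdorffDist_le_of_mem_dist hausdorffDist_nonneg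
    (fun z hz => ⟨x, rfl, dist_le_hausdorffDist_singleton (hAB hz) hB⟩) ?_
  intro z hz
  rw [mem_singleton_iff.mp hz]
  exact ⟨a, ha, dist_comm x a ▸ dist_le_hausdorffDist_singleton (hAB ha) hB⟩

lemma hausdorffDist_le_two_mul_of_subset (hAB : A ⊆ B) (hA : A.Nonempty)
    (hB : Bornology.IsBounded B) : hausdorffDist A B ≤ 2 * hausdorffDist B {x} := by
  obtain ⟨a, ha⟩ := hA
  refine hausdorffDist_le_of_mem_dist (mul_nonneg zero_le_two hausdorffDist_nonneg)
    (fun z hz => ⟨z, hAB hz, by simp [hausdorffDist_nonneg]⟩) fun z hz => ⟨a, ha, ?_⟩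
  calc dist z a ≤ dist z x + dist a x := dist_triangle_right z a x
    _ ≤ 2 * hausdorffDist B {x} := by
      linarith [dist_le_hausdorffDist_singleton (x := x) hz hB,
        dist_le_hausdorffDist_singleton (x := x) (hAB ha) hB]

end HausdorffSingleton

section FuzzyCuts

variable {m : ℕ} {u : Em m → ℝ} {a b : ℝ}

lemma acut_antitone : Antitone (acut u) :=
  fun _ _ hab _ hx => le_trans hab hx

lemma acut_subset_setOf_pos (ha : 0 < a) : acut u a ⊆ {x | 0 < u x} :=
  fun _ hx => ha.trans_le hx

lemma acut_nonempty (hn : ∃ x, u x = 1) (ha : a ≤ 1) : (acut u a).Nonempty :=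
  let ⟨x, hx⟩ := hn
  ⟨x, show a ≤ u x from hx ▸ ha⟩

lemma acut_ftrunc_of_le (ha : 0 < a) (hab : a ≤ b) : acut (ftrunc u a) b = acut u b := by
  ext x
  simp only [acut, ftrunc, mem_ofPred_eq]
  split_ifs with hx
  · rfl
  · exact ⟨fun h => absurd (ha.trans_le (hab.trans h)) (lt_irrefl 0),
      fun h => absurd (hab.trans h) hx⟩

lemma acut_ftrunc_of_pos_of_le (hb : 0 < b) (hba : b ≤ a) :
    acut (ftrunc u a) b = acut u a := by
  ext x
  simp only [acut, ftrunc, mem_ofPred_eq]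
  split_ifs with hx
  · exact ⟨fun _ => hx, fun h => hba.trans h⟩
  · exact ⟨fun h => absurd (hb.trans_le h) (lt_irrefl 0), fun h => absurd h hx⟩

lemma UpperSemicontinuous.ftrunc (husc : UpperSemicontinuous u) (h0 : ∀ x, 0 ≤ u x) (a : ℝ) :
    UpperSemicontinuous (ftrunc u a) := by
  intro x t ht
  by_cases hx : a ≤ u x
  · have hxt : u x < t := by simpa only [_root_.ftrunc, if_pos hx] using ht
    filter_upwards [husc x t hxt] with y hy
    simp only [_root_.ftrunc]
    split_ifs
    exacts [hy, (h0 x).trans_lt hxt]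
  · have ht0 : 0 < t := by simpa only [_root_.ftrunc, if_neg hx] using ht
    filter_upwards [husc x a (lt_of_not_ge hx)] with y hy
    simpa only [_root_.ftrunc, if_neg (not_le.mpr hy)] using ht0

end FuzzyCuts

section FuzzyClasses

variable {m : ℕ} {u v : Em m → ℝ} {p a : ℝ}

lemma IsFuzzyBp.isFuzzyB_ftrunc (hu : IsFuzzyBp p u) (ha : a ∈ Ioc (0:ℝ) 1) :
    IsFuzzyB (ftrunc u a) where
  mem01 x := by
    simp only [ftrunc]
    split_ifs
    exacts [hu.mem01 x, ⟨le_rfl, zero_le_one⟩]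
  normal :=
    let ⟨x, hx⟩ := hu.normal
    ⟨x, by simp [ftrunc, hx, ha.2]⟩
  usc := hu.usc.ftrunc (fun x => (hu.mem01 x).1) a
  bddSupp := by
    refine (hu.compactCuts a ha).isBounded.subset fun x hx => ?_
    simp only [ftrunc, mem_ofPred_eq] at hx
    split_ifs at hx with h
    exacts [h, absurd hx (lt_irrefl 0)]

lemma IsFuzzyB.isCompact_acut (hv : IsFuzzyB v) (ha : 0 < a) : IsCompact (acut v a) :=
  isCompact_of_isClosed_isBounded (hv.usc.isClosed_preimage a)
    (hv.bddSupp.subset (acut_subset_setOf_pos ha))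

lemma IsFuzzyB.hausdorffDist_acut_origin_le (hv : IsFuzzyB v) (ha : a ∈ Ioc (0:ℝ) 1) :
    hausdorffDist (acut v a) {0} ≤ hausdorffDist {x | 0 < v x} {0} :=
  hausdorffDist_singleton_le_of_subset (acut_subset_setOf_pos ha.1) (acut_nonempty hv.normal ha.2)
    hv.bddSupp

lemma IsFuzzyB.antitoneOn_hausdorffDist_acut_origin (hv : IsFuzzyB v) :
    AntitoneOn (fun a => hausdorffDist (acut v a) {0}) (Ioc (0:ℝ) 1) :=
  fun _ ha _ hb hab => hausdorffDist_singleton_le_of_subset (acut_antitone hab)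
    (acut_nonempty hv.normal hb.2) (hv.isCompact_acut ha.1).isBounded

lemma IsFuzzyB.isFuzzyBp (hv : IsFuzzyB v) (hp : 0 ≤ p) : IsFuzzyBp p v where
  mem01 := hv.mem01
  normal := hv.normal
  usc := hv.usc
  compactCuts _ ha := hv.isCompact_acut ha.1
  lp := by
    refine IntegrableOn.of_bound measure_Ioc_lt_top
      ((aemeasurable_restrict_of_antitoneOn measurableSet_Ioc
        hv.antitoneOn_hausdorffDist_acut_origin).pow_const p).aestronglyMeasurable
      (hausdorffDist {x | 0 < v x} {0} ^ p) ?_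
    refine ae_restrict_of_forall_mem measurableSet_Ioc fun a ha => ?_
    rw [Real.norm_of_nonneg (Real.rpow_nonneg hausdorffDist_nonneg p)]
    exact Real.rpow_le_rpow hausdorffDist_nonneg (hv.hausdorffDist_acut_origin_le ha) hp

end FuzzyClasses

section Truncation

variable {m : ℕ} {u : Em m → ℝ} {p a : ℝ}

lemma IsFuzzyBp.integral_hausdorffDist_acut_ftrunc_le (hu : IsFuzzyBp p u) (hp : 0 < p)
    (ha : a ∈ Ioc (0:ℝ) 1) :
    ∫ b in Ioc (0:ℝ) 1, hausdorffDist (acut (ftrunc u a) b) (acut u b) ^ p ≤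
      2 ^ p * ∫ b in Ioc (0:ℝ) a, hausdorffDist (acut u b) ({0} : Set (Em m)) ^ p := by
  set G : ℝ → ℝ := fun b => 2 ^ p * hausdorffDist (acut u b) ({0} : Set (Em m)) ^ p
  have hG0 : ∀ b, 0 ≤ G b := fun _ =>
    mul_nonneg (by positivity) (Real.rpow_nonneg hausdorffDist_nonneg p)
  have hpoint : ∀ b ∈ Ioc (0:ℝ) 1,
      hausdorffDist (acut (ftrunc u a) b) (acut u b) ^ p ≤ (Ioc 0 a).indicator G b := by
    intro b hb
    by_cases hba : b ≤ a
    · rw [acut_ftrunc_of_pos_of_le hb.1 hba,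
        indicator_of_mem (show b ∈ Ioc 0 a from ⟨hb.1, hba⟩)]
      dsimp only [G]
      rw [← Real.mul_rpow zero_le_two hausdorffDist_nonneg]
      exact Real.rpow_le_rpow hausdorffDist_nonneg
        (hausdorffDist_le_two_mul_of_subset (acut_antitone hba)
          (acut_nonempty hu.normal ha.2) (hu.compactCuts b hb).isBounded) hp.le
    · rw [acut_ftrunc_of_le ha.1 (le_of_not_ge hba), hausdorffDist_self_zero,
        Real.zero_rpow hp.ne']
      exact indicator_nonneg (fun b _ => hG0 b) b
  calc _ ≤ ∫ b in Ioc (0:ℝ) 1, (Ioc 0 a).indicator G b :=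
        integral_mono_of_nonneg (ae_of_all _ fun _ => Real.rpow_nonneg hausdorffDist_nonneg p)
          ((hu.lp.const_mul _).indicator measurableSet_Ioc)
          (ae_restrict_of_forall_mem measurableSet_Ioc hpoint)
    _ = 2 ^ p * ∫ b in Ioc (0:ℝ) a, hausdorffDist (acut u b) ({0} : Set (Em m)) ^ p := by
        rw [setIntegral_indicator measurableSet_Ioc,
          inter_eq_right.mpr (Ioc_subset_Ioc_right ha.2), integral_const_mul]

lemma IsFuzzyBp.tendsto_setIntegral_hausdorffDist_acut_origin (hu : IsFuzzyBp p u) :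
    Tendsto (fun a => ∫ b in Ioc (0:ℝ) a, hausdorffDist (acut u b) ({0} : Set (Em m)) ^ p)
      (𝓝[>] 0) (𝓝 0) := by
  have hvol :
      Tendsto (fun a : ℝ => volume.restrict (Ioc (0:ℝ) 1) (Ioc 0 a)) (𝓝[>] 0) (𝓝 0) := by
    refine tendsto_of_tendsto_of_tendsto_of_le_of_le tendsto_const_nhds ?_ (fun _ => zero_le)
      fun a => Measure.restrict_apply_le _ _
    simpa only [Real.volume_Ioc, sub_zero, ENNReal.ofReal_zero, id] using
      ENNReal.tendsto_ofReal (tendsto_nhdsWithin_of_tendsto_nhds (tendsto_id (x := 𝓝 (0:ℝ))))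
  refine (hu.lp.tendsto_setIntegral_nhds_zero hvol).congr' ?_
  filter_upwards [Ioo_mem_nhdsGT zero_lt_one] with a ha
  rw [Measure.restrict_restrict measurableSet_Ioc,
    inter_eq_left.mpr (Ioc_subset_Ioc_right ha.2.le)]

lemma IsFuzzyBp.tendsto_dp_ftrunc (hu : IsFuzzyBp p u) (hp : 0 < p) :
    Tendsto (fun a => dp p (ftrunc u a) u) (𝓝[>] 0) (𝓝 0) := by
  have hint : Tendsto
      (fun a => ∫ b in Ioc (0:ℝ) 1, hausdorffDist (acut (ftrunc u a) b) (acut u b) ^ p)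
      (𝓝[>] 0) (𝓝 0) := by
    refine tendsto_of_tendsto_of_tendsto_of_le_of_le' tendsto_const_nhds
      (by simpa only [mul_zero] using
        hu.tendsto_setIntegral_hausdorffDist_acut_origin.const_mul (2 ^ p))
      (Eventually.of_forall fun _ =>
        integral_nonneg fun _ => Real.rpow_nonneg hausdorffDist_nonneg p) ?_
    filter_upwards [Ioo_mem_nhdsGT zero_lt_one] with a ha
    exact hu.integral_hausdorffDist_acut_ftrunc_le hp ⟨ha.1, ha.2.le⟩
  have hroot := (Real.continuousAt_rpow_const 0 (1 / p) (Or.inr (one_div_pos.mpr hp).le)).tendsto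
  rw [Real.zero_rpow (one_div_pos.mpr hp).ne'] at hroot
  exact hroot.comp hint

end Truncation

/-- `F_B(ℝ^m)` is dense in `(F_B(ℝ^m)^p, d_p)`; in particular
the truncations `u^{(1/n)}` lie in `F_B(ℝ^m)` and converge to `u` in `d_p`. -/
theorem fuzzyB_dense_in_fuzzyBp {m : ℕ} (p : ℝ) (hp : 1 ≤ p)
    (u : Em m → ℝ) (hu : IsFuzzyBp p u) :
    (∀ n : ℕ, IsFuzzyB (ftrunc u (1 / ((n : ℝ) + 1)))) ∧
    Tendsto (fun n : ℕ => dp p (ftrunc u (1 / ((n : ℝ) + 1))) u) atTop (nhds 0) ∧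
    (∀ ε > (0:ℝ), ∃ v : Em m → ℝ, IsFuzzyB v ∧ IsFuzzyBp p v ∧ dp p v u < ε) := by
  have hp0 : 0 < p := zero_lt_one.trans_le hp
  have hlevel : ∀ n : ℕ, 1 / ((n : ℝ) + 1) ∈ Ioc (0:ℝ) 1 := fun n =>
    ⟨by positivity, div_le_one_of_le₀ (by simp) (by positivity)⟩
  have hlevel_tendsto : Tendsto (fun n : ℕ => 1 / ((n : ℝ) + 1)) atTop (𝓝[>] 0) :=
    tendsto_nhdsWithin_iff.mpr
      ⟨tendsto_one_div_add_atTop_nhds_zero_nat, Eventually.of_forall fun n => (hlevel n).1⟩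
  have htrunc := fun n => hu.isFuzzyB_ftrunc (hlevel n)
  have hdp := (hu.tendsto_dp_ftrunc hp0).comp hlevel_tendsto
  refine ⟨htrunc, hdp, fun ε hε => ?_⟩
  obtain ⟨n, hn⟩ := (hdp.eventually_lt_const hε).exists
  exact ⟨_, htrunc n, (htrunc n).isFuzzyBp hp0.le, hn⟩
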